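/- Let L be a compact, second countable Hausdorff space and let μ = {μ_t}_{t>0} be a measurable factorizing family over [0,1]×L. Then μ_t({∅}) > 0 for every t > 0, where ∅ denotes the empty set as an element of 𝒞_t. Consequently the family of Dirac measures ν_t := δ_∅ satisfies ν_t ≪ μ_t and ν_{s+t} = (ν_s⊗ν_t)∘⊕_{s,t}^{-1} for all s,t>0, and the vacuum vectors u_t^{(0)} := μ_t({∅})^{-1/2}·1_{{∅}} ∈ L²(𝒞_t,μ_t) satisfy ‖u_t^{(0)}‖ = 1 and u^{(0)}_{s+t}(Z) = Δ_{s,t}(Z)^{1/2}·u^{(0)}_s(Z∩([0,s]×L))·u^{(0)}_t((Z∩([s,s+t]×L))−(s,0)) for μ_{s+t}-a.e. Z, where Δ_{s,t} = d((μ_s⊗μ_t)∘⊕_{s,t}^{-1})/dμ_{s+t}. -/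

import Mathlib

/-!
Write `p t = μ_t({∅})`. Since `⊕_{s,t}⁻¹{∅} = {∅} × {∅}`, mutual absolute continuity gives
`p (s + t) = 0 ↔ p s * p t = 0`, so the times with `p t ≠ 0` are closed under addition and
under passing to smaller times; one such time therefore gives all of them. One is found from
condition (ii) at the endpoint `r = 0`: almost every `Z` misses `{0} × L`, so by compactness of
`L` it misses some `[0, δ] × L`, while `Z ∩ ([0, δ] × L) = ∅` is null as soon as `p δ = 0`.
Given `p > 0`, the vacuum statements are computations with the atom `{∅}`.
-/

open MeasureTheory Set
open scoped ENNReal NNReal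

namespace RandomSets

variable (L : Type) [TopologicalSpace L]

/-- The time strip `[0,t] × L` inside `ℝ × L`. -/
def strip (t : ℝ) : Set (ℝ × L) := Set.Icc (0:ℝ) t ×ˢ (Set.univ : Set L)

lemma isClosed_strip (t : ℝ) : IsClosed (strip L t) :=
  isClosed_Icc.prod isClosed_univ

/-- Closed subsets of `[0,t] × L`. -/
def Cl (t : ℝ) : Type := {F : Set (ℝ × L) // IsClosed F ∧ F ⊆ strip L t}

variable {L}

lemma isClosed_fstImage (f g : ℝ → ℝ) (hg : Continuous g)
    (hgf : ∀ x, g (f x) = x) (hfg : ∀ x, f (g x) = x)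
    {A : Set (ℝ × L)} (hA : IsClosed A) :
    IsClosed ((fun p : ℝ × L => (f p.1, p.2)) '' A) := by
  have h : (fun p : ℝ × L => (f p.1, p.2)) '' A
      = (fun p : ℝ × L => (g p.1, p.2)) ⁻¹' A := by
    ext p
    constructor
    · rintro ⟨q, hq, rfl⟩
      simpa [hgf] using hq
    · intro hp
      exact ⟨(g p.1, p.2), hp, by simp [hfg]⟩
  rw [h]
  exact hA.preimage (by fun_prop)

variable (L)

/-- The Fell topology on `Cl L t`. -/
def fellTop (t : ℝ) : TopologicalSpace (Cl L t) :=
  TopologicalSpace.generateFrom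
    ({S | ∃ U : Set (ℝ × L), IsOpen U ∧
        S = {F : Cl L t | (F.1 ∩ (U ∩ strip L t)).Nonempty}} ∪
     {S | ∃ K : Set (ℝ × L), IsCompact K ∧ K ⊆ strip L t ∧
        S = {F : Cl L t | F.1 ∩ K = ∅}})

instance (t : ℝ) : TopologicalSpace (Cl L t) := fellTop L t

/-- `Σ_t`, the Borel σ-field of the Fell topology. -/
instance (t : ℝ) : MeasurableSpace (Cl L t) := borel (Cl L t)

variable {L}

/-- Concatenation: `Z₁ ⊕_{s,t} Z₂ = Z₁ ∪ (s + Z₂)` as a closed subset of `[0,s+t] × L`. -/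
noncomputable def concat (s t : ℝ) (Z₁ : Cl L s) (Z₂ : Cl L t) : Cl L (s + t) :=
  ⟨(Z₁.1 ∪ (fun p : ℝ × L => (p.1 + s, p.2)) '' Z₂.1) ∩ strip L (s + t), by
    refine ⟨IsClosed.inter ?_ (isClosed_strip L _), Set.inter_subset_right⟩
    exact Z₁.2.1.union (isClosed_fstImage (· + s) (· - s) (by fun_prop)
      (fun x => by ring) (fun x => by ring) Z₂.2.1)⟩

/-- Concatenation as a map on pairs. -/
noncomputable def concatMap (s t : ℝ) : Cl L s × Cl L t → Cl L (s + t) :=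
  fun p => concat s t p.1 p.2

/-- A factorizing family of probability measures over `[0,1] × L` (Definition 2.2 (i)–(ii)). -/
def IsFactorizing (μ : (t : ℝ) → Measure (Cl L t)) : Prop :=
  (∀ t : ℝ, 0 < t → IsProbabilityMeasure (μ t)) ∧
  (∀ s t : ℝ, 0 < s → 0 < t →
    μ (s + t) ≪ Measure.map (concatMap s t) ((μ s).prod (μ t)) ∧
    Measure.map (concatMap s t) ((μ s).prod (μ t)) ≪ μ (s + t)) ∧
  (∀ t : ℝ, 0 < t → ∀ r ∈ Set.Icc (0:ℝ) t,
    μ t {Z : Cl L t | ∃ ℓ : L, (r, ℓ) ∈ Z.1} = 0)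

/-- The empty configuration, as an element of `𝒞_t`. -/
noncomputable def emptyCl (t : ℝ) : Cl L t := ⟨∅, isClosed_empty, Set.empty_subset _⟩

/-- `Z ∩ ([0,s] × L)`, as a closed subset of `[0,s] × L`. -/
noncomputable def initPart (s : ℝ) {w : ℝ} (Z : Cl L w) : Cl L s :=
  ⟨Z.1 ∩ strip L s, (Z.2.1.inter (isClosed_strip L s)), Set.inter_subset_right⟩

/-- `(Z ∩ ([s,s+t] × L)) - (s,0)`, as a closed subset of `[0,t] × L`. -/
noncomputable def tailPart (s t : ℝ) {w : ℝ} (Z : Cl L w) : Cl L t :=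
  ⟨(fun p : ℝ × L => (p.1 - s, p.2)) ''
      (Z.1 ∩ (Set.Icc s (s + t) ×ˢ (Set.univ : Set L))), by
    constructor
    · exact isClosed_fstImage (· - s) (· + s) (by fun_prop)
        (fun x => by ring) (fun x => by ring)
        (Z.2.1.inter (isClosed_Icc.prod isClosed_univ))
    · rintro p ⟨q, ⟨-, hq⟩, rfl⟩
      simp only [Set.mem_prod, Set.mem_Icc, Set.mem_univ, and_true] at hq
      simp only [strip, Set.mem_prod, Set.mem_Icc, Set.mem_univ, and_true]
      constructor <;> linarith [hq.1, hq.2]⟩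

/-- Time rescaling `σ_t : 𝒞_t → 𝒞_1` (junk value for `t ≤ 0`). -/
noncomputable def timeScale (t : ℝ) (Z : Cl L t) : Cl L 1 :=
  if ht : 0 < t then
    ⟨(fun p : ℝ × L => (p.1 / t, p.2)) '' Z.1, by
      constructor
      · exact isClosed_fstImage (· / t) (· * t)
          (by fun_prop) (fun x => div_mul_cancel₀ x ht.ne')
          (fun x => mul_div_cancel_right₀ x ht.ne') Z.2.1
      · rintro p ⟨q, hq, rfl⟩
        have h1 := Z.2.2 hq
        simp only [strip, Set.mem_prod, Set.mem_Icc, Set.mem_univ, and_true] at h1 ⊢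
        exact ⟨div_nonneg h1.1 ht.le, (div_le_one ht).mpr h1.2⟩⟩
  else ⟨∅, isClosed_empty, Set.empty_subset _⟩

/-- The vacuum vector `u_t^{(0)} = μ_t({∅})^{-1/2} · 1_{{∅}} ∈ L²(𝒞_t, μ_t)`. -/
noncomputable def vacuumVec (μ : (t : ℝ) → Measure (Cl L t)) (t : ℝ) : Cl L t → ℝ :=
  fun Z => (Real.sqrt ((μ t {emptyCl t}).toReal))⁻¹ *
    Set.indicator {emptyCl t} (fun _ => (1:ℝ)) Z

open Filter Topology

lemma forall_pos_of_add_of_add_left {P : ℝ → Prop}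
    (hadd : ∀ s t, 0 < s → 0 < t → P s → P t → P (s + t))
    (hleft : ∀ s t, 0 < s → 0 < t → P (s + t) → P s)
    {t₀ : ℝ} (ht₀ : 0 < t₀) (h₀ : P t₀) {t : ℝ} (ht : 0 < t) : P t := by
  have hmul : ∀ n : ℕ, P ((n + 1) * t₀) := by
    intro n
    induction n with
    | zero => simpa using h₀
    | succ n ih =>
      convert hadd _ _ (by positivity) ht₀ ih h₀ using 1
      push_cast
      ring
  obtain ⟨n, hn⟩ := exists_nat_gt (t / t₀)
  have htn : t < (n + 1) * t₀ := by
    rw [div_lt_iff₀ ht₀] at hn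
    nlinarith
  exact hleft t _ ht (sub_pos.2 htn) (by rw [add_sub_cancel]; exact hmul n)

lemma map_dirac_of_measurableSet_singleton {α β : Type*} [MeasurableSpace α] [MeasurableSpace β]
    {a : α} (ha : MeasurableSet {a}) (f : α → β) :
    (Measure.dirac a).map f = Measure.dirac (f a) := by
  have hnull : Measure.dirac a {a}ᶜ = 0 := by
    rw [Measure.dirac_apply' _ ha.compl, indicator_of_notMem (by simp)]
  have hf : f =ᵐ[Measure.dirac a] fun _ => f a :=
    measure_mono_null (fun x hx (hxa : x = a) => hx (congrArg f hxa)) hnull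
  rw [Measure.map_congr hf, Measure.map_const, measure_univ, one_smul]

lemma dirac_ac_of_measure_singleton_ne_zero {α : Type*} [MeasurableSpace α] {ν : Measure α}
    {a : α} (ha : ν {a} ≠ 0) : Measure.dirac a ≪ ν := by
  refine Measure.AbsolutelyContinuous.mk fun A hA hνA => ?_
  by_cases haA : a ∈ A
  · exact absurd (measure_mono_null (singleton_subset_iff.2 haA) hνA) ha
  · rw [Measure.dirac_apply' _ hA, indicator_of_notMem haA]

lemma eLpNorm_indicator_inv_sqrt {α : Type*} [MeasurableSpace α] {ν : Measure α} {S : Set α}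
    (hS : MeasurableSet S) (h₀ : ν S ≠ 0) (hS_top : ν S ≠ ⊤) :
    eLpNorm (S.indicator fun _ => (√(ν S).toReal)⁻¹) 2 ν = 1 := by
  have hpos : 0 < (ν S).toReal := ENNReal.toReal_pos h₀ hS_top
  set x := (ν S).toReal
  have hνS : ν S = ENNReal.ofReal x := (ENNReal.ofReal_toReal hS_top).symm
  rw [eLpNorm_indicator_const hS two_ne_zero ENNReal.ofNat_ne_top, ENNReal.toReal_ofNat,
    hνS, ENNReal.ofReal_rpow_of_pos hpos,
    Real.enorm_eq_ofReal (by positivity), ← ENNReal.ofReal_mul (by positivity),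
    ← Real.sqrt_eq_rpow, inv_mul_cancel₀ (Real.sqrt_pos.2 hpos).ne', ENNReal.ofReal_one]

lemma inv_sqrt_eq_sqrt_mul_inv_sqrt_mul_inv_sqrt {a b c d : ℝ} (ha : 0 < a) (hb : 0 < b)
    (hc : 0 < c) (hd : 0 ≤ d) (h : d * c = a * b) : (√c)⁻¹ = √d * (√a)⁻¹ * (√b)⁻¹ := by
  have hsqrt : √d * √c = √a * √b := by rw [← Real.sqrt_mul hd, ← Real.sqrt_mul ha.le, h]
  have := Real.sqrt_pos.2 ha
  have := Real.sqrt_pos.2 hb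
  have := Real.sqrt_pos.2 hc
  field_simp
  linarith

instance (t : ℝ) : BorelSpace (Cl L t) := ⟨rfl⟩

lemma measurableSet_inter_eq_empty {t : ℝ} {K : Set (ℝ × L)} (hK : IsCompact K)
    (hKt : K ⊆ strip L t) : MeasurableSet {F : Cl L t | F.1 ∩ K = ∅} :=
  (show IsOpen {F : Cl L t | F.1 ∩ K = ∅} from
    TopologicalSpace.isOpen_generateFrom_of_mem (Or.inr ⟨K, hK, hKt, rfl⟩)).measurableSet

lemma isCompact_strip [CompactSpace L] (t : ℝ) : IsCompact (strip L t) :=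
  isCompact_Icc.prod isCompact_univ

lemma strip_mono {X : Type} {s t : ℝ} (h : s ≤ t) : strip X s ⊆ strip X t :=
  prod_mono (Icc_subset_Icc_right h) subset_rfl

lemma eq_emptyCl_iff {t : ℝ} {Z : Cl L t} : Z = emptyCl t ↔ Z.1 = ∅ :=
  Subtype.ext_iff

lemma measurableSet_singleton_emptyCl [CompactSpace L] (t : ℝ) :
    MeasurableSet ({emptyCl t} : Set (Cl L t)) := by
  have h : ({emptyCl t} : Set (Cl L t)) = {F | F.1 ∩ strip L t = ∅} := by
    ext Z
    simp [eq_emptyCl_iff, inter_eq_left.2 Z.2.2]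
  rw [h]
  exact measurableSet_inter_eq_empty (isCompact_strip t) subset_rfl

lemma concat_val {s t : ℝ} (hs : 0 ≤ s) (ht : 0 ≤ t) (Z₁ : Cl L s) (Z₂ : Cl L t) :
    (concat s t Z₁ Z₂).1 = Z₁.1 ∪ (fun p : ℝ × L => (p.1 + s, p.2)) '' Z₂.1 := by
  refine inter_eq_left.2 (union_subset (Z₁.2.2.trans (strip_mono (by linarith))) ?_)
  rintro _ ⟨q, hq, rfl⟩
  obtain ⟨⟨hq₀, hqt⟩, -⟩ := Z₂.2.2 hq
  exact ⟨⟨by linarith, by linarith⟩, trivial⟩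

lemma concat_emptyCl (s t : ℝ) : concat s t (emptyCl s) (emptyCl t) = (emptyCl (s + t) : Cl L _) :=
  eq_emptyCl_iff.2 (by simp [concat, emptyCl])

lemma concat_eq_emptyCl_iff {s t : ℝ} (hs : 0 ≤ s) (ht : 0 ≤ t) (Z₁ : Cl L s) (Z₂ : Cl L t) :
    concat s t Z₁ Z₂ = emptyCl (s + t) ↔ Z₁ = emptyCl s ∧ Z₂ = emptyCl t := by
  simp only [eq_emptyCl_iff, concat_val hs ht, union_empty_iff, image_eq_empty]

lemma concatMap_preimage_singleton_emptyCl {s t : ℝ} (hs : 0 ≤ s) (ht : 0 ≤ t) :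
    concatMap s t ⁻¹' {emptyCl (s + t)} = ({emptyCl s} ×ˢ {emptyCl t} : Set (Cl L s × Cl L t)) := by
  ext ⟨Z₁, Z₂⟩
  exact concat_eq_emptyCl_iff hs ht Z₁ Z₂

lemma concatMap_preimage_inter_strip_eq_empty {s t : ℝ} (hs : 0 ≤ s) (ht : 0 ≤ t) :
    concatMap s t ⁻¹' {F : Cl L (s + t) | F.1 ∩ strip L s = ∅}
      ⊆ ({emptyCl s} : Set (Cl L s)) ×ˢ univ := by
  rintro ⟨Z₁, Z₂⟩ (h : (concat s t Z₁ Z₂).1 ∩ strip L s = ∅)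
  refine ⟨eq_emptyCl_iff.2 (subset_empty_iff.1 ?_), trivial⟩
  rw [← h, concat_val hs ht]
  exact subset_inter subset_union_left Z₁.2.2

lemma initPart_emptyCl (s w : ℝ) : initPart s (emptyCl w) = (emptyCl s : Cl L s) :=
  eq_emptyCl_iff.2 (empty_inter _)

lemma tailPart_emptyCl (s t w : ℝ) : tailPart s t (emptyCl w) = (emptyCl t : Cl L t) :=
  eq_emptyCl_iff.2 (by simp [tailPart, emptyCl])

lemma eq_emptyCl_of_initPart_of_tailPart {s t : ℝ} {Z : Cl L (s + t)}
    (h₁ : initPart s Z = emptyCl s) (h₂ : tailPart s t Z = emptyCl t) : Z = emptyCl (s + t) := by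
  refine eq_emptyCl_iff.2 (eq_empty_of_forall_notMem fun p hp => ?_)
  obtain ⟨⟨hp₀, hpt⟩, -⟩ := Z.2.2 hp
  rcases le_total p.1 s with hps | hsp
  · have : p ∈ (initPart s Z).1 := ⟨hp, ⟨hp₀, hps⟩, trivial⟩
    rwa [h₁] at this
  · have : (p.1 - s, p.2) ∈ (tailPart s t Z).1 := ⟨p, ⟨hp, ⟨hsp, hpt⟩, trivial⟩, rfl⟩
    rwa [h₂] at this

lemma eventually_inter_strip_eq_empty [CompactSpace L] {Z : Set (ℝ × L)} (hZ : IsClosed Z)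
    (h₀ : ∀ ℓ, ((0 : ℝ), ℓ) ∉ Z) : ∀ᶠ s in 𝓝 (0 : ℝ), Z ∩ strip L s = ∅ := by
  have hnear : ∀ᶠ x in 𝓝 (0 : ℝ), ∀ ℓ ∈ (univ : Set L), (x, ℓ) ∈ Zᶜ :=
    isCompact_univ.eventually_forall_of_forall_eventually fun ℓ _ =>
      hZ.isOpen_compl.mem_nhds (h₀ ℓ)
  obtain ⟨l, u, ⟨hl, hu⟩, hsub⟩ := mem_nhds_iff_exists_Ioo_subset.1 hnear
  filter_upwards [Iio_mem_nhds hu] with s hs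
  refine eq_empty_of_forall_notMem ?_
  rintro p ⟨hpZ, ⟨hp₀, hps⟩, -⟩
  exact hsub ⟨hl.trans_le hp₀, hps.trans_lt hs⟩ p.2 trivial hpZ

variable {μ : (t : ℝ) → Measure (Cl L t)}

lemma vacuumVec_eq_indicator (t : ℝ) :
    vacuumVec μ t
      = ({emptyCl t} : Set (Cl L t)).indicator fun _ => (√(μ t {emptyCl t}).toReal)⁻¹ := by
  ext Z
  by_cases hZ : Z = emptyCl t <;> simp [vacuumVec, hZ]

-- Measurability of `concatMap` for the Fell σ-field is not available; it is recovered a.e. from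
-- `μ (s + t) ≪ map (concatMap s t) _`, since the image of a non-a.e.-measurable map is `0`.
lemma aemeasurable_concatMap (hμ : IsFactorizing μ) {s t : ℝ} (hs : 0 < s) (ht : 0 < t) :
    AEMeasurable (concatMap s t) ((μ s).prod (μ t)) := by
  by_contra h
  have := hμ.1 (s + t) (add_pos hs ht)
  have hac := (hμ.2.1 s t hs ht).1
  rw [Measure.map_of_not_aemeasurable h, Measure.absolutelyContinuous_zero_iff] at hac
  exact IsProbabilityMeasure.ne_zero _ hac

lemma map_concatMap_singleton_emptyCl (hμ : IsFactorizing μ) [CompactSpace L] {s t : ℝ}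
    (hs : 0 < s) (ht : 0 < t) :
    ((μ s).prod (μ t)).map (concatMap s t) {emptyCl (s + t)}
      = μ s {emptyCl s} * μ t {emptyCl t} := by
  have := hμ.1 t ht
  rw [Measure.map_apply_of_aemeasurable (aemeasurable_concatMap hμ hs ht)
    (measurableSet_singleton_emptyCl _), concatMap_preimage_singleton_emptyCl hs.le ht.le,
    Measure.prod_prod]

lemma measure_singleton_emptyCl_add_eq_zero_iff (hμ : IsFactorizing μ) [CompactSpace L]
    {s t : ℝ} (hs : 0 < s) (ht : 0 < t) :
    μ (s + t) {emptyCl (s + t)} = 0 ↔ μ s {emptyCl s} * μ t {emptyCl t} = 0 := by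
  rw [← map_concatMap_singleton_emptyCl hμ hs ht]
  exact ⟨fun h => (hμ.2.1 s t hs ht).2 h, fun h => (hμ.2.1 s t hs ht).1 h⟩

lemma measure_inter_strip_eq_empty_eq_zero (hμ : IsFactorizing μ) [CompactSpace L] {s w : ℝ}
    (hs : 0 < s) (hsw : s < w) (h₀ : μ s {emptyCl s} = 0) :
    μ w {F : Cl L w | F.1 ∩ strip L s = ∅} = 0 := by
  obtain ⟨t, ht, rfl⟩ : ∃ t, 0 < t ∧ w = s + t := ⟨w - s, by linarith, by ring⟩
  have := hμ.1 t ht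
  apply (hμ.2.1 s t hs ht).1
  rw [Measure.map_apply_of_aemeasurable (aemeasurable_concatMap hμ hs ht)
    (measurableSet_inter_eq_empty (isCompact_strip s) (strip_mono (by linarith)))]
  refine measure_mono_null (concatMap_preimage_inter_strip_eq_empty hs.le ht.le) ?_
  rw [Measure.prod_prod, h₀, zero_mul]

lemma exists_measure_singleton_emptyCl_ne_zero (hμ : IsFactorizing μ) [CompactSpace L] :
    ∃ s, 0 < s ∧ μ s {emptyCl s} ≠ 0 := by
  by_contra! h
  obtain ⟨u, -, hu, hu₀⟩ := exists_seq_strictAnti_tendsto' (zero_lt_one' ℝ)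
  have hcover : univ ⊆ (⋃ n, {F : Cl L 1 | F.1 ∩ strip L (u n) = ∅})
      ∪ {F : Cl L 1 | ∃ ℓ : L, ((0 : ℝ), ℓ) ∈ F.1} := by
    intro Z _
    by_cases hZ : ∃ ℓ : L, ((0 : ℝ), ℓ) ∈ Z.1
    · exact Or.inr hZ
    · exact Or.inl (mem_iUnion.2
        (hu₀.eventually (eventually_inter_strip_eq_empty Z.2.1 (not_exists.1 hZ))).exists)
  have huniv : μ 1 univ = 0 := measure_mono_null hcover <| measure_union_null
    (measure_iUnion_null fun n => measure_inter_strip_eq_empty_eq_zero hμ (hu n).1 (hu n).2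
      (h _ (hu n).1))
    (hμ.2.2 1 one_pos 0 ⟨le_rfl, zero_le_one⟩)
  have := hμ.1 1 one_pos
  exact one_ne_zero (measure_univ.symm.trans huniv)

lemma measure_singleton_emptyCl_ne_zero (hμ : IsFactorizing μ) [CompactSpace L] {t : ℝ}
    (ht : 0 < t) : μ t {emptyCl t} ≠ 0 := by
  obtain ⟨t₀, ht₀, h₀⟩ := exists_measure_singleton_emptyCl_ne_zero hμ
  refine forall_pos_of_add_of_add_left (P := fun t => μ t {emptyCl t} ≠ 0)
    (fun s t hs ht hs₀ ht₀ => ?_) (fun s t hs ht h => ?_) ht₀ h₀ ht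
  · rw [Ne, measure_singleton_emptyCl_add_eq_zero_iff hμ hs ht]
    exact mul_ne_zero hs₀ ht₀
  · rw [Ne, measure_singleton_emptyCl_add_eq_zero_iff hμ hs ht] at h
    exact left_ne_zero_of_mul h

lemma map_concatMap_dirac_emptyCl [CompactSpace L] (s t : ℝ) :
    ((Measure.dirac (emptyCl s)).prod (Measure.dirac (emptyCl t))).map (concatMap s t)
      = (Measure.dirac (emptyCl (s + t)) : Measure (Cl L (s + t))) := by
  rw [Measure.dirac_prod_dirac, map_dirac_of_measurableSet_singleton
    (singleton_prod_singleton ▸ (measurableSet_singleton_emptyCl s).prod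
      (measurableSet_singleton_emptyCl t))]
  exact congrArg _ (concat_emptyCl s t)

lemma eLpNorm_vacuumVec (hμ : IsFactorizing μ) [CompactSpace L] {t : ℝ} (ht : 0 < t) :
    eLpNorm (vacuumVec μ t) 2 (μ t) = 1 := by
  have := hμ.1 t ht
  rw [vacuumVec_eq_indicator]
  exact eLpNorm_indicator_inv_sqrt (measurableSet_singleton_emptyCl t)
    (measure_singleton_emptyCl_ne_zero hμ ht) (measure_ne_top _ _)

lemma mul_measure_singleton_emptyCl_of_eq_withDensity (hμ : IsFactorizing μ)
    [CompactSpace L] {s t : ℝ} (hs : 0 < s) (ht : 0 < t) {Δ : Cl L (s + t) → ℝ≥0∞}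
    (hΔ : ((μ s).prod (μ t)).map (concatMap s t) = (μ (s + t)).withDensity Δ) :
    Δ (emptyCl (s + t)) * μ (s + t) {emptyCl (s + t)} = μ s {emptyCl s} * μ t {emptyCl t} := by
  have hm := measurableSet_singleton_emptyCl (L := L) (s + t)
  rw [← map_concatMap_singleton_emptyCl hμ hs ht, hΔ, withDensity_apply _ hm,
    ← setLIntegral_const]
  exact setLIntegral_congr_fun hm fun Z hZ => by rw [mem_singleton_iff.1 hZ]

lemma vacuumVec_add (hμ : IsFactorizing μ) [CompactSpace L] {s t : ℝ} (hs : 0 < s)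
    (ht : 0 < t) {Δ : Cl L (s + t) → ℝ≥0∞}
    (hΔ : ((μ s).prod (μ t)).map (concatMap s t) = (μ (s + t)).withDensity Δ)
    (Z : Cl L (s + t)) :
    vacuumVec μ (s + t) Z
      = √(Δ Z).toReal * vacuumVec μ s (initPart s Z) * vacuumVec μ t (tailPart s t Z) := by
  simp only [vacuumVec_eq_indicator]
  by_cases hZ : Z = emptyCl (s + t)
  · subst hZ
    have := hμ.1 s hs
    have := hμ.1 t ht
    have := hμ.1 (s + t) (add_pos hs ht)
    simp only [initPart_emptyCl, tailPart_emptyCl, indicator_of_mem (mem_singleton _)]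
    refine inv_sqrt_eq_sqrt_mul_inv_sqrt_mul_inv_sqrt ?_ ?_ ?_ ENNReal.toReal_nonneg ?_
    · exact ENNReal.toReal_pos (measure_singleton_emptyCl_ne_zero hμ hs) (measure_ne_top _ _)
    · exact ENNReal.toReal_pos (measure_singleton_emptyCl_ne_zero hμ ht) (measure_ne_top _ _)
    · exact ENNReal.toReal_pos (measure_singleton_emptyCl_ne_zero hμ (add_pos hs ht))
        (measure_ne_top _ _)
    · rw [← ENNReal.toReal_mul, ← ENNReal.toReal_mul,
        mul_measure_singleton_emptyCl_of_eq_withDensity hμ hs ht hΔ]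
  · rw [indicator_of_notMem (show Z ∉ _ from hZ)]
    by_cases h₁ : initPart s Z = emptyCl s
    · have h₂ : tailPart s t Z ≠ emptyCl t := mt (eq_emptyCl_of_initPart_of_tailPart h₁) hZ
      rw [indicator_of_notMem (show tailPart s t Z ∉ _ from h₂), mul_zero]
    · rw [indicator_of_notMem (show initPart s Z ∉ _ from h₁), mul_zero, zero_mul]

theorem vacuum_unit_of_compact_general
    [CompactSpace L]
    (μ : (t : ℝ) → Measure (Cl L t)) (hμ : IsFactorizing μ)
    (Δ : (s t : ℝ) → Cl L (s + t) → ℝ≥0∞)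
    (hΔ : ∀ s t : ℝ, 0 < s → 0 < t →
      Measure.map (concatMap s t) ((μ s).prod (μ t))
        = (μ (s + t)).withDensity (Δ s t)) :
    (∀ t : ℝ, 0 < t → 0 < μ t {emptyCl t}) ∧
    (∀ t : ℝ, 0 < t → Measure.dirac (emptyCl t) ≪ μ t) ∧
    (∀ s t : ℝ, 0 < s → 0 < t →
      Measure.map (concatMap s t)
          ((Measure.dirac (emptyCl s)).prod (Measure.dirac (emptyCl t)))
        = (Measure.dirac (emptyCl (s + t)) : Measure (Cl L (s + t)))) ∧
    (∀ t : ℝ, 0 < t → eLpNorm (vacuumVec μ t) 2 (μ t) = 1) ∧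
    (∀ s t : ℝ, 0 < s → 0 < t →
      vacuumVec μ (s + t) =ᵐ[μ (s + t)] fun Z =>
        Real.sqrt ((Δ s t Z).toReal) * vacuumVec μ s (initPart s Z) *
          vacuumVec μ t (tailPart s t Z)) :=
  ⟨fun _ ht => pos_iff_ne_zero.2 (measure_singleton_emptyCl_ne_zero hμ ht),
    fun _ ht => dirac_ac_of_measure_singleton_ne_zero (measure_singleton_emptyCl_ne_zero hμ ht),
    fun s t _ _ => map_concatMap_dirac_emptyCl s t,
    fun _ ht => eLpNorm_vacuumVec hμ ht,
    fun _ _ hs ht => .of_forall (vacuumVec_add hμ hs ht (hΔ _ _ hs ht))⟩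

/-- Corollary 3.3: if `L` is compact, then for every measurable
factorizing family `μ` over `[0,1] × L` the empty configuration has positive mass,
the Dirac family `δ_∅` is a dominated exactly factorizing family, and the vacuum
vectors form a normalized unit. -/
theorem vacuum_unit_of_compact
    [SecondCountableTopology L] [LocallyCompactSpace L] [T2Space L] [CompactSpace L]
    (μ : (t : ℝ) → Measure (Cl L t)) (hμ : IsFactorizing μ)
    (hatom : ∀ t : ℝ, 0 < t → ∀ S : Finset (Cl L t), μ t ((↑S : Set (Cl L t))ᶜ) ≠ 0)
    (R : Set (Set (Cl L 1))) (hRcount : R.Countable) (hRring : MeasureTheory.IsSetRing R)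
    (hRgen : MeasurableSpace.generateFrom R = (inferInstance : MeasurableSpace (Cl L 1)))
    (hRmeas : ∀ A ∈ R, Measurable fun t : Set.Ioi (0:ℝ) =>
      Measure.map (timeScale t.1) (μ t.1) A)
    (Δ : (s t : ℝ) → Cl L (s + t) → ℝ≥0∞)
    (hΔ : ∀ s t : ℝ, 0 < s → 0 < t →
      Measure.map (concatMap s t) ((μ s).prod (μ t))
        = (μ (s + t)).withDensity (Δ s t)) :
    (∀ t : ℝ, 0 < t → 0 < μ t {emptyCl t}) ∧
    (∀ t : ℝ, 0 < t → Measure.dirac (emptyCl t) ≪ μ t) ∧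
    (∀ s t : ℝ, 0 < s → 0 < t →
      Measure.map (concatMap s t)
          ((Measure.dirac (emptyCl s)).prod (Measure.dirac (emptyCl t)))
        = (Measure.dirac (emptyCl (s + t)) : Measure (Cl L (s + t)))) ∧
    (∀ t : ℝ, 0 < t → eLpNorm (vacuumVec μ t) 2 (μ t) = 1) ∧
    (∀ s t : ℝ, 0 < s → 0 < t →
      vacuumVec μ (s + t) =ᵐ[μ (s + t)] fun Z =>
        Real.sqrt ((Δ s t Z).toReal) * vacuumVec μ s (initPart s Z) *
          vacuumVec μ t (tailPart s t Z)) :=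
  vacuum_unit_of_compact_general μ hμ Δ hΔ

end RandomSets
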